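/- Let Σ be a closed J-holomorphic curve in S⁶. The Dirac operator 𝐃_Σ is J-antilinear: 𝐃_Σ(Jν) = −J 𝐃_Σ ν for all ν ∈ C^∞(NΣ). Consequently, for the homogeneous kernel spaces V_λ = {r^{λ−1}ν_Σ : 𝐃_Σν_Σ = −(λ+1)Jν_Σ} of the cone C over Σ, the symmetry J V_{−1+λ} = V_{−1−λ} holds, and in particular d_{−1+λ} = d_{−1−λ} where d_μ = dim V_μ. -/

import Mathlib

open scoped RealInnerProductSpace

noncomputable section

/-- ℝ⁷ with its Euclidean inner product. -/
abbrev E7 : Type := EuclideanSpace ℝ (Fin 7)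

/-- (e^i ∧ e^j ∧ e^k)(x, y, z). -/
def tripleDet (i j k : Fin 7) (x y z : E7) : ℝ :=
  Matrix.det !![x i, y i, z i; x j, y j, z j; x k, y k, z k]

/-- The standard G₂ 3-form
φₑ = e^{123} − e^{145} − e^{167} − e^{246} − e^{275} − e^{347} − e^{356}
(indices shifted to start from 0). -/
def phiE (x y z : E7) : ℝ :=
  tripleDet 0 1 2 x y z - tripleDet 0 3 4 x y z - tripleDet 0 5 6 x y z -
    tripleDet 1 3 5 x y z - tripleDet 1 6 4 x y z - tripleDet 2 3 6 x y z -
    tripleDet 2 4 5 x y z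

/-- The octonionic cross product on ℝ⁷ = Im 𝕆, characterized by ⟨u × v, w⟩ = φₑ(u,v,w). -/
def cross7 (u v : E7) : E7 :=
  (EuclideanSpace.equiv (Fin 7) ℝ).symm fun k => phiE u v (EuclideanSpace.single k 1)

/-- Tangential projection onto T_x S⁶ (for ‖x‖ = 1): w ↦ w − ⟨x,w⟩x. -/
def tproj (x w : E7) : E7 := w - ⟪x, w⟫ • x

/-- Chart domain for a local parametrization of a surface Σ ⊂ S⁶. -/
abbrev Pt : Type := ℝ × ℝ

/-- The standard complex structure j₀ of the chart ℝ². -/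
def j0 (c : Pt) : Pt := (-c.2, c.1)

/-- The span of the position vector and the tangent plane of the parametrized surface
F : ℝ² → Σ ⊂ S⁶ at F(p). -/
def TanSpan (F : Pt → E7) (p : Pt) : Submodule ℝ E7 :=
  Submodule.span ℝ {F p, fderiv ℝ F p (1, 0), fderiv ℝ F p (0, 1)}

/-- The normal space N_{F(p)}Σ of Σ in S⁶. -/
def Nsp (F : Pt → E7) (p : Pt) : Submodule ℝ E7 := (TanSpan F p)ᗮ

/-- Orthogonal projection onto the normal space of Σ in S⁶. -/
def PN (F : Pt → E7) (p : Pt) (w : E7) : E7 := (Submodule.orthogonalProjectionOnto (Nsp F p) w : E7)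

/-- The normal connection ∇^⊥ (induced by the Levi–Civita connection of the round S⁶) on normal
vector fields ξ along Σ, in the chart direction c. -/
def covN (F ξ : Pt → E7) (p : Pt) (c : Pt) : E7 := PN F p (fderiv ℝ ξ p c)

/-- The normal part ∇̃^⊥ of the characteristic SU(3) connection
∇̃_u ξ = ∇_u ξ + ½ (∇_u J)(Jξ), in the chart direction c;
here (∇_u J)v = u ×_{S⁶} v on S⁶. -/
def covT (F ξ : Pt → E7) (p : Pt) (c : Pt) : E7 :=
  PN F p (fderiv ℝ ξ p c + (2 : ℝ)⁻¹ • cross7 (fderiv ℝ F p c) (cross7 (F p) (ξ p)))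

/-- The Dirac operator 𝐃_Σ = Σᵢ fᵢ × ∇̃^⊥_{fᵢ} of the link, in a conformal chart
(fᵢ = ∂ᵢF/ρ with ρ = ‖∂₁F‖ = ‖∂₂F‖). -/
def DSigC (F ξ : Pt → E7) (p : Pt) : E7 :=
  (‖fderiv ℝ F p (1, 0)‖ ^ 2)⁻¹ •
    (cross7 (fderiv ℝ F p (1, 0)) (covT F ξ p (1, 0)) +
      cross7 (fderiv ℝ F p (0, 1)) (covT F ξ p (0, 1)))

/-- The homogeneous kernel V_λ of the cone over Σ, identified with the (λ+1)-eigenspace of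
J𝐃_Σ, i.e. {ν : 𝐃_Σ ν = −(λ+1) Jν}. -/
def Vset (F : Pt → E7) (l : ℝ) : Set (Pt → E7) :=
  {ν | ContDiff ℝ (⊤ : ℕ∞) ν ∧ (∀ p, ν p ∈ Nsp F p) ∧
    ∀ p, DSigC F ν p = (-(l + 1)) • cross7 (F p) (ν p)}

/-!
Write `J = F p × ·`. Holomorphicity of the chart says that `J` maps the tangent plane to itself;
being skew, `J` then preserves the normal plane and commutes with the normal projection. The
identity `u × (v × w) + v × (u × w) = -2⟪u, v⟫ w + ⟪u, w⟫ v + ⟪v, w⟫ u` of the octonionic cross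
product gives, for `x = F p` and `u, n ⊥ x`, `x × (u × (x × n)) = u × n + ⟪u, x × n⟫ x`: the
torsion term of `∇̃` exactly compensates the derivative of `J`, so `∇̃^⊥ (J ν) = J ∇̃^⊥ ν`, and
`u × J η = -J (u × η)` for tangent `u`, so `𝐃_Σ (J ν) = -J 𝐃_Σ ν`. As `J² = -1` on normal vectors,
`J` maps the `(λ+1)`-eigenspace of `J 𝐃_Σ` onto the `-(λ+1)`-eigenspace, with inverse `-J`.
-/

theorem cross7_eq (u v : E7) : cross7 u v = !₂[
    (u 1*v 2 - u 2*v 1) - (u 3*v 4 - u 4*v 3) - (u 5*v 6 - u 6*v 5),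
    (u 2*v 0 - u 0*v 2) - (u 3*v 5 - u 5*v 3) - (u 6*v 4 - u 4*v 6),
    (u 0*v 1 - u 1*v 0) - (u 3*v 6 - u 6*v 3) - (u 4*v 5 - u 5*v 4),
    -(u 4*v 0 - u 0*v 4) - (u 5*v 1 - u 1*v 5) - (u 6*v 2 - u 2*v 6),
    -(u 0*v 3 - u 3*v 0) - (u 1*v 6 - u 6*v 1) - (u 5*v 2 - u 2*v 5),
    -(u 6*v 0 - u 0*v 6) - (u 1*v 3 - u 3*v 1) - (u 2*v 4 - u 4*v 2),
    -(u 0*v 5 - u 5*v 0) - (u 4*v 1 - u 1*v 4) - (u 2*v 3 - u 3*v 2)] := by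
  ext k
  fin_cases k <;>
    simp [cross7, phiE, tripleDet, Matrix.det_fin_three] <;> ring

theorem real_inner_eq_sum_seven (u v : E7) : ⟪u, v⟫ =
    u 0*v 0 + u 1*v 1 + u 2*v 2 + u 3*v 3 + u 4*v 4 + u 5*v 5 + u 6*v 6 := by
  simp [PiLp.inner_apply, Fin.sum_univ_seven]; ring

theorem cross7_add_left (u u' v : E7) :
    cross7 (u + u') v = cross7 u v + cross7 u' v := by
  ext k; fin_cases k <;> simp [cross7_eq] <;> ring

theorem cross7_add_right (u v v' : E7) :
    cross7 u (v + v') = cross7 u v + cross7 u v' := by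
  ext k; fin_cases k <;> simp [cross7_eq] <;> ring

theorem cross7_smul_left (r : ℝ) (u v : E7) : cross7 (r • u) v = r • cross7 u v := by
  ext k; fin_cases k <;> simp [cross7_eq] <;> ring

theorem cross7_smul_right (r : ℝ) (u v : E7) : cross7 u (r • v) = r • cross7 u v := by
  ext k; fin_cases k <;> simp [cross7_eq] <;> ring

theorem cross7_cross7_add_cross7_cross7 (u v w : E7) :
    cross7 u (cross7 v w) + cross7 v (cross7 u w)
      = (-(2 * ⟪u, v⟫)) • w + ⟪u, w⟫ • v + ⟪v, w⟫ • u := by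
  ext k
  fin_cases k <;>
    simp [cross7_eq, real_inner_eq_sum_seven] <;> ring

theorem inner_cross7_right (u v w : E7) : ⟪w, cross7 u v⟫ = -⟪v, cross7 u w⟫ := by
  simp [cross7_eq, real_inner_eq_sum_seven]; ring

def cross7CLM : E7 →L[ℝ] E7 →L[ℝ] E7 :=
  LinearMap.toContinuousLinearMap <| LinearMap.toContinuousLinearMap.toLinearMap ∘ₗ
    LinearMap.mk₂ ℝ cross7 cross7_add_left cross7_smul_left cross7_add_right cross7_smul_right

theorem cross7CLM_apply (u v : E7) : cross7CLM u v = cross7 u v := rfl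

theorem cross7_neg_right (u v : E7) : cross7 u (-v) = -cross7 u v :=
  map_neg (cross7CLM u) v

theorem cross7_self (u : E7) : cross7 u u = 0 := by
  ext k; fin_cases k <;> simp [cross7_eq] <;> ring

theorem inner_cross7_self_right (u v : E7) : ⟪u, cross7 u v⟫ = 0 := by
  rw [inner_cross7_right, cross7_self, inner_zero_right, neg_zero]

theorem cross7_cross7_eq_neg {x n : E7} (hx : ⟪x, x⟫ = 1) (hxn : ⟪x, n⟫ = 0) :
    cross7 x (cross7 x n) = -n := by
  have h := cross7_cross7_add_cross7_cross7 x x n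
  rw [hx, hxn, ← two_smul ℝ] at h
  have h2 : (2 : ℝ) • cross7 x (cross7 x n) = (2 : ℝ) • (-n) := by rw [h]; module
  exact smul_right_injective _ two_ne_zero h2

theorem cross7_cross7_anticomm {x u n : E7} (hxu : ⟪x, u⟫ = 0) (hxn : ⟪x, n⟫ = 0)
    (hun : ⟪u, n⟫ = 0) : cross7 u (cross7 x n) = -cross7 x (cross7 u n) := by
  have h := cross7_cross7_add_cross7_cross7 u x n
  rw [real_inner_comm, hxu, hun, hxn] at h
  linear_combination (norm := module) h

theorem cross7_cross7_cross7 {x u n : E7} (hx : ⟪x, x⟫ = 1) (hxn : ⟪x, n⟫ = 0)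
    (hxu : ⟪x, u⟫ = 0) :
    cross7 x (cross7 u (cross7 x n)) = cross7 u n + ⟪u, cross7 x n⟫ • x := by
  have h := cross7_cross7_add_cross7_cross7 x u (cross7 x n)
  rw [hxu, inner_cross7_self_right, cross7_cross7_eq_neg hx hxn, cross7_neg_right] at h
  linear_combination (norm := module) h

theorem ContDiff.cross7 {f g : Pt → E7} (hf : ContDiff ℝ (⊤ : ℕ∞) f)
    (hg : ContDiff ℝ (⊤ : ℕ∞) g) : ContDiff ℝ (⊤ : ℕ∞) fun q => cross7 (f q) (g q) :=
  (cross7CLM.isBoundedBilinearMap.contDiff.comp (hf.prodMk hg) :)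

theorem fderiv_cross7 {f g : Pt → E7} {p : Pt} (hf : DifferentiableAt ℝ f p)
    (hg : DifferentiableAt ℝ g p) (c : Pt) :
    fderiv ℝ (fun q => cross7 (f q) (g q)) p c
      = cross7 (fderiv ℝ f p c) (g p) + cross7 (f p) (fderiv ℝ g p c) := by
  change fderiv ℝ (fun q => cross7CLM (f q) (g q)) p c = _
  rw [(cross7CLM.hasFDerivAt_of_bilinear hf.hasFDerivAt hg.hasFDerivAt).fderiv]
  simp [cross7CLM_apply, add_comm]

theorem inner_fderiv_eq_zero_of_norm_eq_one {G H : Type*} [NormedAddCommGroup G]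
    [NormedSpace ℝ G] [NormedAddCommGroup H] [InnerProductSpace ℝ H] {f : G → H} {x : G}
    (hf : DifferentiableAt ℝ f x) (hnorm : ∀ y, ‖f y‖ = 1) (v : G) :
    ⟪f x, fderiv ℝ f x v⟫ = 0 := by
  have hconst : (fun y => ‖f y‖ ^ 2) = fun _ => (1 : ℝ) := by simp [hnorm]
  have h := hf.hasFDerivAt.norm_sq
  rw [hconst] at h
  have := congr($(h.unique (hasFDerivAt_const (1 : ℝ) x)) v)
  simpa using this

section NormalBundle

variable {F : Pt → E7} {p : Pt}

theorem self_mem_tanSpan : F p ∈ TanSpan F p :=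
  Submodule.subset_span (by simp)

theorem fderiv_mem_tanSpan (c : Pt) : fderiv ℝ F p c ∈ TanSpan F p := by
  have hc : c = c.1 • ((1 : ℝ), (0 : ℝ)) + c.2 • ((0 : ℝ), (1 : ℝ)) := by ext <;> simp
  rw [hc, map_add, map_smul, map_smul]
  exact add_mem (Submodule.smul_mem _ _ (Submodule.subset_span (by simp)))
    (Submodule.smul_mem _ _ (Submodule.subset_span (by simp)))

theorem cross7_mem_tanSpan (hholo : ∀ c, fderiv ℝ F p (j0 c) = cross7 (F p) (fderiv ℝ F p c))
    {w : E7} (hw : w ∈ TanSpan F p) : cross7 (F p) w ∈ TanSpan F p := by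
  have hle : TanSpan F p ≤ (TanSpan F p).comap (cross7CLM (F p)).toLinearMap := by
    refine Submodule.span_le.2 ?_
    rintro _ (rfl | rfl | rfl) <;>
      simp only [SetLike.mem_coe, Submodule.mem_comap, ContinuousLinearMap.coe_coe,
        cross7CLM_apply, cross7_self, ← hholo]
    exacts [zero_mem _, fderiv_mem_tanSpan _, fderiv_mem_tanSpan _]
  exact hle hw

theorem cross7_mem_nsp (hholo : ∀ c, fderiv ℝ F p (j0 c) = cross7 (F p) (fderiv ℝ F p c))
    {w : E7} (hw : w ∈ Nsp F p) : cross7 (F p) w ∈ Nsp F p := by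
  refine (Submodule.mem_orthogonal _ _).2 fun t ht => ?_
  rw [inner_cross7_right, real_inner_comm,
    Submodule.inner_right_of_mem_orthogonal (cross7_mem_tanSpan hholo ht) hw, neg_zero]

theorem cross7_cross7_of_mem_nsp (hunit : ‖F p‖ = 1) {w : E7} (hw : w ∈ Nsp F p) :
    cross7 (F p) (cross7 (F p) w) = -w :=
  cross7_cross7_eq_neg (by rw [real_inner_self_eq_norm_sq, hunit, one_pow])
    (Submodule.inner_right_of_mem_orthogonal self_mem_tanSpan hw)

theorem PN_eq_starProjection : PN F p = (Nsp F p).starProjection := rfl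

theorem PN_mem (w : E7) : PN F p w ∈ Nsp F p :=
  (Submodule.orthogonalProjectionOnto (Nsp F p) w).2

theorem PN_eq_self {w : E7} (hw : w ∈ Nsp F p) : PN F p w = w :=
  Submodule.starProjection_eq_self_iff.2 hw

theorem PN_add_of_mem_tanSpan (w : E7) {t : E7} (ht : t ∈ TanSpan F p) :
    PN F p (w + t) = PN F p w := by
  have ht' : PN F p t = 0 :=
    (Submodule.starProjection_apply_eq_zero_iff _).2 (Submodule.le_orthogonal_orthogonal _ ht)
  rw [PN_eq_starProjection, map_add, ← PN_eq_starProjection, ht', add_zero]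

theorem PN_cross7 (hholo : ∀ c, fderiv ℝ F p (j0 c) = cross7 (F p) (fderiv ℝ F p c))
    (w : E7) : PN F p (cross7 (F p) w) = cross7 (F p) (PN F p w) := by
  have hw : w = PN F p w + (TanSpan F p).starProjection w := by
    rw [PN_eq_starProjection, Nsp, add_comm,
      Submodule.starProjection_add_starProjection_orthogonal]
  conv_lhs => rw [hw, cross7_add_right]
  rw [PN_add_of_mem_tanSpan _ (cross7_mem_tanSpan hholo (Submodule.starProjection_apply_mem _ w)),
    PN_eq_self (cross7_mem_nsp hholo (PN_mem w))]

end NormalBundle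

section Dirac

variable {F ν : Pt → E7} {p : Pt}

theorem covT_cross7 (hF : DifferentiableAt ℝ F p) (hunit : ∀ q, ‖F q‖ = 1)
    (hholo : ∀ c, fderiv ℝ F p (j0 c) = cross7 (F p) (fderiv ℝ F p c))
    (hν : DifferentiableAt ℝ ν p) (hνN : ν p ∈ Nsp F p) (c : Pt) :
    covT F (fun q => cross7 (F q) (ν q)) p c = cross7 (F p) (covT F ν p c) := by
  have hx : ⟪F p, F p⟫ = 1 := by rw [real_inner_self_eq_norm_sq, hunit, one_pow]
  have hxν : ⟪F p, ν p⟫ = 0 := Submodule.inner_right_of_mem_orthogonal self_mem_tanSpan hνN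
  have hxu : ⟪F p, fderiv ℝ F p c⟫ = 0 := inner_fderiv_eq_zero_of_norm_eq_one hF hunit c
  -- the two arguments of `PN` differ by a multiple of the position vector, which `PN` kills
  have hsplit : cross7 (F p)
        (fderiv ℝ ν p c + (2 : ℝ)⁻¹ • cross7 (fderiv ℝ F p c) (cross7 (F p) (ν p))) =
      (fderiv ℝ (fun q => cross7 (F q) (ν q)) p c +
          (2 : ℝ)⁻¹ • cross7 (fderiv ℝ F p c) (cross7 (F p) (cross7 (F p) (ν p)))) +
        ((2 : ℝ)⁻¹ * ⟪fderiv ℝ F p c, cross7 (F p) (ν p)⟫) • F p := by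
    rw [fderiv_cross7 hF hν, cross7_cross7_eq_neg hx hxν, cross7_add_right, cross7_smul_right,
      cross7_cross7_cross7 hx hxν hxu, cross7_neg_right]
    module
  rw [covT, covT, ← PN_cross7 hholo, hsplit,
    PN_add_of_mem_tanSpan _ (Submodule.smul_mem _ _ self_mem_tanSpan)]

theorem DSigC_cross7 (hF : DifferentiableAt ℝ F p) (hunit : ∀ q, ‖F q‖ = 1)
    (hholo : ∀ c, fderiv ℝ F p (j0 c) = cross7 (F p) (fderiv ℝ F p c))
    (hν : DifferentiableAt ℝ ν p) (hνN : ν p ∈ Nsp F p) :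
    DSigC F (fun q => cross7 (F q) (ν q)) p = -cross7 (F p) (DSigC F ν p) := by
  have hanti : ∀ c, cross7 (fderiv ℝ F p c) (cross7 (F p) (covT F ν p c)) =
      -cross7 (F p) (cross7 (fderiv ℝ F p c) (covT F ν p c)) := fun c =>
    cross7_cross7_anticomm (inner_fderiv_eq_zero_of_norm_eq_one hF hunit c)
      (Submodule.inner_right_of_mem_orthogonal self_mem_tanSpan (PN_mem _))
      (Submodule.inner_right_of_mem_orthogonal (fderiv_mem_tanSpan c) (PN_mem _))
  rw [DSigC, DSigC, covT_cross7 hF hunit hholo hν hνN, covT_cross7 hF hunit hholo hν hνN,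
    hanti, hanti, cross7_smul_right, cross7_add_right]
  module

theorem DSigC_neg : DSigC F (-ν) p = -DSigC F ν p := by
  have hcov : ∀ c, covT F (-ν) p c = -covT F ν p c := fun c => by
    rw [covT, covT, PN_eq_starProjection, ← map_neg]
    congr 1
    rw [fderiv_neg, neg_apply, Pi.neg_apply, cross7_neg_right, cross7_neg_right]
    module
  rw [DSigC, DSigC, hcov, hcov, cross7_neg_right, cross7_neg_right]
  module

end Dirac

section Vset

variable {F : Pt → E7}

theorem neg_mem_Vset {ν : Pt → E7} {l : ℝ} (hν : ν ∈ Vset F l) : -ν ∈ Vset F l := by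
  obtain ⟨hsmooth, hN, heig⟩ := hν
  refine ⟨hsmooth.neg, fun p => neg_mem (hN p), fun p => ?_⟩
  rw [DSigC_neg, heig p, Pi.neg_apply, cross7_neg_right]
  module

theorem mapsTo_cross7_Vset (hF : ContDiff ℝ (⊤ : ℕ∞) F) (hunit : ∀ q, ‖F q‖ = 1)
    (hholo : ∀ p c, fderiv ℝ F p (j0 c) = cross7 (F p) (fderiv ℝ F p c)) (l : ℝ) :
    Set.MapsTo (fun ν q => cross7 (F q) (ν q)) (Vset F (-1 + l)) (Vset F (-1 - l)) := by
  rintro ν ⟨hsmooth, hN, heig⟩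
  refine ⟨hF.cross7 hsmooth, fun p => cross7_mem_nsp (hholo p) (hN p), fun p => ?_⟩
  rw [DSigC_cross7 (hF.differentiable (by simp) p) hunit (hholo p)
      (hsmooth.differentiable (by simp) p) (hN p), heig p, cross7_smul_right,
    cross7_cross7_of_mem_nsp (hunit p) (hN p)]
  module

theorem bijOn_cross7_Vset (hF : ContDiff ℝ (⊤ : ℕ∞) F) (hunit : ∀ q, ‖F q‖ = 1)
    (hholo : ∀ p c, fderiv ℝ F p (j0 c) = cross7 (F p) (fderiv ℝ F p c)) (l : ℝ) :
    Set.BijOn (fun ν q => cross7 (F q) (ν q)) (Vset F (-1 + l)) (Vset F (-1 - l)) := by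
  have hback :
      Set.MapsTo (fun μ q => cross7 (F q) ((-μ) q)) (Vset F (-1 - l)) (Vset F (-1 + l)) := by
    have h := mapsTo_cross7_Vset hF hunit hholo (-l)
    rw [← sub_eq_add_neg, sub_neg_eq_add] at h
    exact h.comp fun μ => neg_mem_Vset
  refine Set.InvOn.bijOn ⟨fun ν hν => ?_, fun μ hμ => ?_⟩
    (mapsTo_cross7_Vset hF hunit hholo l) hback
  · funext q
    simp only [Pi.neg_apply, cross7_neg_right, cross7_cross7_of_mem_nsp (hunit q) (hν.2.1 q),
      neg_neg]
  · funext q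
    simp only [Pi.neg_apply, cross7_neg_right, cross7_cross7_of_mem_nsp (hunit q) (hμ.2.1 q),
      neg_neg]

end Vset

theorem statement8_general (F : Pt → E7)
    (hF : ContDiff ℝ (⊤ : ℕ∞) F)
    (hunit : ∀ p, ‖F p‖ = 1)
    (hholo : ∀ p c, fderiv ℝ F p (j0 c) = cross7 (F p) (fderiv ℝ F p c)) :
    (∀ ν : Pt → E7, ContDiff ℝ (⊤ : ℕ∞) ν → (∀ p, ν p ∈ Nsp F p) →
        ∀ p, DSigC F (fun q => cross7 (F q) (ν q)) p = - cross7 (F p) (DSigC F ν p)) ∧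
      (∀ l : ℝ,
        (fun ν : Pt → E7 => fun q => cross7 (F q) (ν q)) '' Vset F (-1 + l)
          = Vset F (-1 - l)) ∧
      (∀ l : ℝ, Nonempty (↥(Vset F (-1 + l)) ≃ ↥(Vset F (-1 - l)))) :=
  ⟨fun _ hν hN p => DSigC_cross7 (hF.differentiable (by simp) p) hunit (hholo p)
      (hν.differentiable (by simp) p) (hN p),
    fun l => (bijOn_cross7_Vset hF hunit hholo l).image_eq,
    fun l => ⟨(bijOn_cross7_Vset hF hunit hholo l).equiv _⟩⟩

/-- Let Σ be a closed J-holomorphic curve in S⁶ (parametrized by a holomorphic conformal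
chart F).  The Dirac operator 𝐃_Σ is J-antilinear: 𝐃_Σ(Jν) = −J 𝐃_Σ ν for every normal field
ν.  Consequently, for the homogeneous kernels V_λ = {ν : 𝐃_Σν = −(λ+1)Jν} of the cone C over
Σ, the symmetry J V_{−1+λ} = V_{−1−λ} holds, and in particular d_{−1+λ} = d_{−1−λ}. -/
theorem statement8 (F : Pt → E7)
    (hF : ContDiff ℝ (⊤ : ℕ∞) F)
    (hunit : ∀ p, ‖F p‖ = 1)
    (hholo : ∀ p c, fderiv ℝ F p (j0 c) = cross7 (F p) (fderiv ℝ F p c))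
    (himm : ∀ p, fderiv ℝ F p (1, 0) ≠ 0) :
    (∀ ν : Pt → E7, ContDiff ℝ (⊤ : ℕ∞) ν → (∀ p, ν p ∈ Nsp F p) →
        ∀ p, DSigC F (fun q => cross7 (F q) (ν q)) p = - cross7 (F p) (DSigC F ν p)) ∧
      (∀ l : ℝ,
        (fun ν : Pt → E7 => fun q => cross7 (F q) (ν q)) '' Vset F (-1 + l)
          = Vset F (-1 - l)) ∧
      (∀ l : ℝ, Nonempty (↥(Vset F (-1 + l)) ≃ ↥(Vset F (-1 - l)))) :=
  statement8_general F hF hunit hholo
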